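/- arXiv:1201.4765 — 6 statements merged into one kernel-verified Lean document; each statement's English description precedes it below -/
import Mathlib

section
/- Let Λ be a locally finite measure on ℝ^d and let ξ be an ℝ^d-valued stochastic process with finite-dimensional distribution P_{t1,...,tn} (the law of (ξ(t1),...,ξ(tn)) in ℝ^{dn}). Suppose that for every t the convolution Λ*P_t is locally finite. Then for all t1,...,tn, the measure Λ_{t1,...,tn}(A) = ∫_{ℝ^d} P_{t1,...,tn}(A − (x,...,x)) Λ(dx) is a locally finite measure on ℝ^{dn}. -/
open MeasureTheory Matrix Bornology

/-- If the convolution `Λ * P_t` is locally finite for every `t`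
(i.e. every bounded Borel set gets finite mass), then for all `t₁,…,tₙ` the measure
`Λ_{t₁,…,tₙ}(A) = ∫ P_{t₁,…,tₙ}(A - (x,…,x)) Λ(dx)` is locally finite on `ℝ^{dn}`. -/
theorem stmt0 {d : ℕ} {Ω : Type*} [MeasureSpace Ω] [IsProbabilityMeasure (volume : Measure Ω)]
    (ξ : ℝ → Ω → (Fin d → ℝ)) (hξ : ∀ t, Measurable (ξ t))
    (Λ : Measure (Fin d → ℝ))
    (hconv : ∀ t : ℝ, ∀ A : Set (Fin d → ℝ), MeasurableSet A → IsBounded A →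
      ∫⁻ x, Measure.map (ξ t) (volume : Measure Ω) ((fun y => y + x) ⁻¹' A) ∂Λ < ⊤) :
    ∀ (n : ℕ) (t : Fin (n + 1) → ℝ) (A : Set (Fin (n + 1) → Fin d → ℝ)),
      MeasurableSet A → IsBounded A →
      ∫⁻ x, Measure.map (fun (ω : Ω) (i : Fin (n+1)) => ξ (t i) ω) (volume : Measure Ω)
        ((fun y => y + fun _ => x) ⁻¹' A) ∂Λ < ⊤ := by
  intro n t A hAm hAb
  -- project onto coordinate 0
  set B : Set (Fin d → ℝ) := closure ((fun y : Fin (n+1) → Fin d → ℝ => y 0) '' A) with hB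
  have hBm : MeasurableSet B := isClosed_closure.measurableSet
  have hBb : IsBounded B := by
    refine IsBounded.closure ?_
    exact (LipschitzWith.eval (0 : Fin (n+1))).isBounded_image hAb
  have hmeas : Measurable (fun (ω : Ω) (i : Fin (n+1)) => ξ (t i) ω) :=
    measurable_pi_lambda _ fun i => hξ (t i)
  have key : ∀ x : Fin d → ℝ,
      Measure.map (fun (ω : Ω) (i : Fin (n+1)) => ξ (t i) ω) (volume : Measure Ω)
        ((fun y => y + fun _ => x) ⁻¹' A)
      ≤ Measure.map (ξ (t 0)) (volume : Measure Ω) ((fun y => y + x) ⁻¹' B) := by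
    intro x
    have hsub : (fun y : Fin (n+1) → Fin d → ℝ => y + fun _ => x) ⁻¹' A ⊆
        (fun y : Fin (n+1) → Fin d → ℝ => y 0) ⁻¹' ((fun y => y + x) ⁻¹' B) := by
      intro y hy
      exact subset_closure ⟨y + fun _ => x, hy, rfl⟩
    calc Measure.map (fun (ω : Ω) (i : Fin (n+1)) => ξ (t i) ω) (volume : Measure Ω)
          ((fun y => y + fun _ => x) ⁻¹' A)
        ≤ Measure.map (fun (ω : Ω) (i : Fin (n+1)) => ξ (t i) ω) (volume : Measure Ω)
          ((fun y : Fin (n+1) → Fin d → ℝ => y 0) ⁻¹' ((fun y => y + x) ⁻¹' B)) :=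
          measure_mono hsub
      _ = Measure.map (ξ (t 0)) (volume : Measure Ω) ((fun y => y + x) ⁻¹' B) := by
          rw [Measure.map_apply hmeas ((measurable_pi_apply 0) ((measurable_add_const x) hBm)),
            Measure.map_apply (hξ (t 0)) ((measurable_add_const x) hBm)]
          rfl
  calc ∫⁻ x, Measure.map (fun (ω : Ω) (i : Fin (n+1)) => ξ (t i) ω) (volume : Measure Ω)
        ((fun y => y + fun _ => x) ⁻¹' A) ∂Λ
      ≤ ∫⁻ x, Measure.map (ξ (t 0)) (volume : Measure Ω) ((fun y => y + x) ⁻¹' B) ∂Λ :=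
        lintegral_mono key
    _ < ⊤ := hconv (t 0) B hBm hBb
end

section
/- Let σ1 and σ2 be centred bivariate Gaussian measures with covariance matrices diag(1+c1², 1) and diag(1, 1+c2²) respectively, for constants c1, c2 > 0. Let g : ℝ → ℝ be a measurable function such that ∫_ℝ g(x+y) e^{−y²/2} dy is finite for all x ∈ ℝ, and let μ_g be the measure on ℝ² with density (x1,x2) ↦ g(x1/c1 + x2/c2). Then σ1 * μ_g = σ2 * μ_g. -/
open MeasureTheory ProbabilityTheory Real
open scoped ENNReal NNReal

lemma conv_withDensity_aux {G : Type*} [MeasurableSpace G] [AddCommGroup G] [MeasurableAdd₂ G]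
    [MeasurableSub₂ G] {vol : Measure G} [SFinite vol] [vol.IsAddLeftInvariant]
    (μ : Measure G) [SFinite μ] {f : G → ℝ≥0∞} (hf : Measurable f) :
    (μ.prod (vol.withDensity f)).map (fun q : G × G => q.1 + q.2)
      = vol.withDensity fun z => ∫⁻ x, f (z - x) ∂μ := by
  ext s hs
  rw [Measure.map_apply measurable_add hs,
    Measure.prod_apply (measurable_add hs)]
  have h1 : ∀ x : G, (vol.withDensity f) (Prod.mk x ⁻¹' ((fun q : G × G => q.1 + q.2) ⁻¹' s))
      = ∫⁻ y, s.indicator (1 : G → ℝ≥0∞) (x + y) * f y ∂vol := by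
    intro x
    have hA : MeasurableSet (Prod.mk x ⁻¹' ((fun q : G × G => q.1 + q.2) ⁻¹' s)) :=
      (measurable_const_add x) hs
    rw [withDensity_apply _ hA, ← lintegral_indicator hA]
    refine lintegral_congr fun y => ?_
    by_cases hy : x + y ∈ s
    · simp [Set.indicator_of_mem, hy, Set.indicator_of_mem (a := y)
        (s := Prod.mk x ⁻¹' ((fun q : G × G => q.1 + q.2) ⁻¹' s)) (by simpa using hy)]
    · simp [Set.indicator_of_notMem, hy, Set.indicator_of_notMem (a := y)
        (s := Prod.mk x ⁻¹' ((fun q : G × G => q.1 + q.2) ⁻¹' s)) (by simpa using hy)]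
  simp_rw [h1]
  have h2 : ∀ x : G, ∫⁻ y, s.indicator (1 : G → ℝ≥0∞) (x + y) * f y ∂vol
      = ∫⁻ z, s.indicator (1 : G → ℝ≥0∞) z * f (z - x) ∂vol := by
    intro x
    rw [← lintegral_add_left_eq_self (fun z => s.indicator (1 : G → ℝ≥0∞) z * f (z - x)) x]
    refine lintegral_congr fun y => ?_
    simp [add_sub_cancel_left]
  simp_rw [h2]
  rw [lintegral_lintegral_swap]
  · rw [withDensity_apply _ hs, ← lintegral_indicator hs]
    refine lintegral_congr fun z => ?_
    rw [lintegral_const_mul' _ _ (by by_cases h : z ∈ s <;> simp [h])]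
    by_cases h : z ∈ s <;> simp [h]
  · apply Measurable.aemeasurable
    exact ((measurable_const.indicator hs).comp measurable_snd).mul
      (hf.comp (measurable_snd.sub measurable_fst))

lemma gauss_pdf_key (v w : ℝ≥0) (hv : v ≠ 0) (hw : w ≠ 0) (z x : ℝ) :
    gaussianPDFReal 0 v x * gaussianPDFReal 0 w (z - x)
      = gaussianPDFReal 0 (v + w) z
        * gaussianPDFReal ((v : ℝ) * z / ((v : ℝ) + w)) (v * w / (v + w)) x := by
  have hv' : (0:ℝ) < v := lt_of_le_of_ne v.coe_nonneg (by exact_mod_cast hv.symm)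
  have hw' : (0:ℝ) < w := lt_of_le_of_ne w.coe_nonneg (by exact_mod_cast hw.symm)
  have hvw : (0:ℝ) < (v:ℝ) + w := by linarith
  simp only [gaussianPDFReal, sub_zero]
  have hcast : ((v * w / (v + w) : ℝ≥0) : ℝ) = (v : ℝ) * w / ((v : ℝ) + w) := by push_cast; ring
  rw [hcast]
  have hconst : (√(2 * π * v))⁻¹ * (√(2 * π * w))⁻¹
      = (√(2 * π * ((v:ℝ) + w)))⁻¹ * (√(2 * π * ((v:ℝ) * w / ((v:ℝ) + w))))⁻¹ := by
    rw [← mul_inv, ← mul_inv, ← Real.sqrt_mul (by positivity), ← Real.sqrt_mul (by positivity)]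
    congr 1
    field_simp
  have hexp : rexp (-x ^ 2 / (2 * v)) * rexp (-(z - x) ^ 2 / (2 * w))
      = rexp (-z ^ 2 / (2 * ((v:ℝ) + w)))
        * rexp (-(x - (v:ℝ) * z / ((v:ℝ) + w)) ^ 2 / (2 * ((v:ℝ) * w / ((v:ℝ) + w)))) := by
    rw [← Real.exp_add, ← Real.exp_add]
    congr 1
    field_simp
    ring
  push_cast
  calc (√(2 * π * v))⁻¹ * rexp (-x ^ 2 / (2 * v))
        * ((√(2 * π * w))⁻¹ * rexp (-(z - x) ^ 2 / (2 * w)))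
      = ((√(2 * π * v))⁻¹ * (√(2 * π * w))⁻¹)
        * (rexp (-x ^ 2 / (2 * v)) * rexp (-(z - x) ^ 2 / (2 * w))) := by ring
    _ = _ := by rw [hconst, hexp]; ring

lemma gauss_conv (v w : ℝ≥0) (hv : v ≠ 0) (hw : w ≠ 0) :
    ((gaussianReal 0 v).prod (gaussianReal 0 w)).map (fun p : ℝ × ℝ => p.1 + p.2)
      = gaussianReal 0 (v + w) := by
  have hvw : v + w ≠ 0 := by simp [hv]
  have hs : v * w / (v + w) ≠ 0 := by
    simp [div_eq_zero_iff, hv, hw, hvw, mul_eq_zero]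
  rw [gaussianReal_of_var_ne_zero 0 hw, conv_withDensity_aux _ (measurable_gaussianPDF 0 w),
    gaussianReal_of_var_ne_zero 0 hvw]
  congr 1
  funext z
  have hgm : Measurable fun x : ℝ => gaussianPDF 0 w (z - x) :=
    (measurable_gaussianPDF 0 w).comp (measurable_const.sub measurable_id)
  rw [gaussianReal_of_var_ne_zero 0 hv,
    lintegral_withDensity_eq_lintegral_mul volume (measurable_gaussianPDF 0 v) hgm]
  simp only [Pi.mul_apply]
  have : ∀ x : ℝ, gaussianPDF 0 v x * gaussianPDF 0 w (z - x)
      = ENNReal.ofReal (gaussianPDFReal 0 (v + w) z)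
        * gaussianPDF ((v : ℝ) * z / ((v : ℝ) + w)) (v * w / (v + w)) x := by
    intro x
    rw [gaussianPDF, gaussianPDF, gaussianPDF,
      ← ENNReal.ofReal_mul (gaussianPDFReal_nonneg _ _ _), gauss_pdf_key v w hv hw,
      ENNReal.ofReal_mul (gaussianPDFReal_nonneg _ _ _)]
  simp_rw [this]
  rw [lintegral_const_mul' _ _ ENNReal.ofReal_ne_top, lintegral_gaussianPDF_eq_one _ hs,
    mul_one]
  rfl

lemma map_lin_prod (a b : ℝ) (μ ν : Measure ℝ) [SFinite μ] [SFinite ν] :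
    (μ.prod ν).map (fun p : ℝ × ℝ => a * p.1 + b * p.2)
      = ((μ.map (a * ·)).prod (ν.map (b * ·))).map (fun p : ℝ × ℝ => p.1 + p.2) := by
  rw [Measure.map_prod_map _ _ (measurable_const_mul a) (measurable_const_mul b),
    Measure.map_map measurable_add ((measurable_const_mul a).prodMap (measurable_const_mul b))]
  rfl

lemma gauss_map_eq (c₁ c₂ : ℝ) (hc₁ : 0 < c₁) (hc₂ : 0 < c₂) :
    (((gaussianReal 0 (1 + ⟨c₁ ^ 2, sq_nonneg c₁⟩ : NNReal)).prod (gaussianReal 0 1)).map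
        (fun p : ℝ × ℝ => p.1 / c₁ + p.2 / c₂))
      = (((gaussianReal 0 1).prod (gaussianReal 0 (1 + ⟨c₂ ^ 2, sq_nonneg c₂⟩ : NNReal))).map
        (fun p : ℝ × ℝ => p.1 / c₁ + p.2 / c₂)) := by
  have h₁ : (fun p : ℝ × ℝ => p.1 / c₁ + p.2 / c₂)
      = fun p : ℝ × ℝ => c₁⁻¹ * p.1 + c₂⁻¹ * p.2 := by
    funext p; rw [div_eq_inv_mul, div_eq_inv_mul]
  set A : ℝ≥0 := ⟨(c₁⁻¹) ^ 2, sq_nonneg _⟩ with hA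
  set B : ℝ≥0 := ⟨(c₂⁻¹) ^ 2, sq_nonneg _⟩ with hB
  have hAne : A ≠ 0 := by
    rw [hA]; intro h
    have : (c₁⁻¹) ^ 2 = 0 := congrArg Subtype.val h
    exact (pow_ne_zero 2 (inv_ne_zero hc₁.ne')) this
  have hBne : B ≠ 0 := by
    rw [hB]; intro h
    have : (c₂⁻¹) ^ 2 = 0 := congrArg Subtype.val h
    exact (pow_ne_zero 2 (inv_ne_zero hc₂.ne')) this
  have hmap : ∀ v : ℝ≥0, (gaussianReal 0 v).map (c₁⁻¹ * ·) = gaussianReal 0 (A * v) := by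
    intro v; rw [gaussianReal_map_const_mul]; simp [hA]; rfl
  have hmap' : ∀ v : ℝ≥0, (gaussianReal 0 v).map (c₂⁻¹ * ·) = gaussianReal 0 (B * v) := by
    intro v; rw [gaussianReal_map_const_mul]; simp [hB]; rfl
  rw [h₁, map_lin_prod, map_lin_prod, hmap, hmap', hmap, hmap']
  erw [gauss_conv _ _ (mul_ne_zero hAne (ne_of_gt (add_pos_of_pos_of_nonneg one_pos zero_le))) (mul_ne_zero hBne one_ne_zero),
    gauss_conv _ _ (mul_ne_zero hAne one_ne_zero) (mul_ne_zero hBne (ne_of_gt (add_pos_of_pos_of_nonneg one_pos zero_le)))]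
  congr 1
  rw [← NNReal.coe_inj]
  show c₁⁻¹ ^ 2 * (1 + c₁ ^ 2) + c₂⁻¹ ^ 2 * 1 = c₁⁻¹ ^ 2 * 1 + c₂⁻¹ ^ 2 * (1 + c₂ ^ 2)
  push_cast [hA, hB]
  field_simp
  ring

/-- For centred bivariate Gaussians `σ₁, σ₂` with covariance matrices
`diag(1+c₁²,1)` and `diag(1,1+c₂²)` and a nonnegative measurable `g` with
`∫ g(x+y) e^{-y²/2} dy < ∞` for every `x`, the measure `μ_g` on `ℝ²` with density
`(x₁,x₂) ↦ g(x₁/c₁ + x₂/c₂)` satisfies `σ₁ * μ_g = σ₂ * μ_g`. -/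
theorem stmt1 (c₁ c₂ : ℝ) (hc₁ : 0 < c₁) (hc₂ : 0 < c₂)
    (g : ℝ → ℝ) (hg : Measurable g) (hg0 : ∀ x, 0 ≤ g x)
    (hgint : ∀ x : ℝ, Integrable (fun y => g (x + y) * rexp (-y ^ 2 / 2)))
    (σ₁ σ₂ : Measure (ℝ × ℝ))
    (hσ₁ : σ₁ = (gaussianReal 0 (1 + ⟨c₁ ^ 2, sq_nonneg c₁⟩ : NNReal)).prod
      (gaussianReal 0 1))
    (hσ₂ : σ₂ = (gaussianReal 0 1).prod
      (gaussianReal 0 (1 + ⟨c₂ ^ 2, sq_nonneg c₂⟩ : NNReal)))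
    (μg : Measure (ℝ × ℝ))
    (hμg : μg = volume.withDensity fun p => ENNReal.ofReal (g (p.1 / c₁ + p.2 / c₂))) :
    (σ₁.prod μg).map (fun q => q.1 + q.2) = (σ₂.prod μg).map (fun q => q.1 + q.2) := by
  subst hσ₁ hσ₂ hμg
  have hL : Measurable fun p : ℝ × ℝ => p.1 / c₁ + p.2 / c₂ :=
    (measurable_fst.div_const c₁).add (measurable_snd.div_const c₂)
  have hfm : Measurable fun p : ℝ × ℝ => ENNReal.ofReal (g (p.1 / c₁ + p.2 / c₂)) :=
    (hg.comp hL).ennreal_ofReal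
  rw [conv_withDensity_aux _ hfm, conv_withDensity_aux _ hfm]
  congr 1
  funext z
  have hrw : ∀ x : ℝ × ℝ,
      ENNReal.ofReal (g ((z - x).1 / c₁ + (z - x).2 / c₂))
        = ENNReal.ofReal (g ((z.1 / c₁ + z.2 / c₂) - (x.1 / c₁ + x.2 / c₂))) := by
    intro x
    congr 1
    congr 1
    simp only [Prod.fst_sub, Prod.snd_sub]
    ring
  simp_rw [hrw]
  have hh : Measurable fun t : ℝ => ENNReal.ofReal (g ((z.1 / c₁ + z.2 / c₂) - t)) :=
    (hg.comp (measurable_const.sub measurable_id)).ennreal_ofReal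
  rw [← lintegral_map hh hL, ← lintegral_map hh hL, gauss_map_eq c₁ c₂ hc₁ hc₂]
end

section
/- Let ξ be an ℝ^d-valued stochastic process and λ ∈ ℝ^d such that E[e^{⟨λ,ξ(t)⟩}] < ∞ for all t. For t1,...,tn ∈ ℝ define the measure μ_{t1,...,tn}(A) = E[1{(0, ξ(t2)−ξ(t1), ..., ξ(tn)−ξ(t1)) ∈ A} · e^{⟨λ,ξ(t1)⟩}] on ℝ^{dn}. Then for every bounded Borel set A ⊂ ℝ^{dn}, ∫_{ℝ^d} P_{t1,...,tn}(A − (x,...,x)) e^{−⟨λ,x⟩} dx = ∫_{ℝ^d} μ_{t1,...,tn}(A − (z,...,z)) e^{−⟨λ,z⟩} dz, where P_{t1,...,tn} is the law of (ξ(t1),...,ξ(tn)). -/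
open MeasureTheory Matrix Real Bornology

/-- The disintegration identity
`∫ P_{t₁,…,tₙ}(A-(x,…,x)) e^{-⟨λ,x⟩} dx = ∫ μ_{t₁,…,tₙ}(A-(z,…,z)) e^{-⟨λ,z⟩} dz`,
where `μ_{t₁,…,tₙ}(A) = E[1{(0,ξ(t₂)-ξ(t₁),…,ξ(tₙ)-ξ(t₁)) ∈ A} e^{⟨λ,ξ(t₁)⟩}]`. -/
theorem stmt4 {d : ℕ} {Ω : Type*} [MeasureSpace Ω]
    [IsProbabilityMeasure (volume : Measure Ω)]
    (ξ : ℝ → Ω → (Fin d → ℝ)) (hξ : ∀ t, Measurable (ξ t))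
    (l : Fin d → ℝ)
    (hint : ∀ t, ∫⁻ ω, ENNReal.ofReal (rexp (l ⬝ᵥ ξ t ω)) ∂(volume : Measure Ω) < ⊤)
    (n : ℕ) (t : Fin (n + 1) → ℝ)
    (μ : Set (Fin (n + 1) → Fin d → ℝ) → ENNReal)
    (hμ : ∀ A, μ A = ∫⁻ ω, Set.indicator A (fun _ => ENNReal.ofReal (rexp (l ⬝ᵥ ξ (t 0) ω)))
        (fun i => ξ (t i) ω - ξ (t 0) ω) ∂(volume : Measure Ω))
    (A : Set (Fin (n + 1) → Fin d → ℝ)) (hA : MeasurableSet A) (hAb : IsBounded A) :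
    ∫⁻ x, Measure.map (fun (ω : Ω) (i : Fin (n + 1)) => ξ (t i) ω) (volume : Measure Ω)
        ((fun y => y + fun _ => x) ⁻¹' A) * ENNReal.ofReal (rexp (-(l ⬝ᵥ x)))
      = ∫⁻ z, μ ((fun y => y + fun _ => z) ⁻¹' A) * ENNReal.ofReal (rexp (-(l ⬝ᵥ z))) := by
  classical
  have hdot : Measurable fun v : Fin d → ℝ => l ⬝ᵥ v := by
    simp only [dotProduct]
    exact Finset.measurable_sum _ fun i _ => (measurable_pi_apply i).const_mul _
  set F : Ω → (Fin (n + 1) → Fin d → ℝ) := fun ω i => ξ (t i) ω with hFdef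
  have hF : Measurable F := measurable_pi_lambda _ fun i => hξ (t i)
  have hshift : ∀ x : Fin d → ℝ,
      MeasurableSet ((fun y : Fin (n + 1) → Fin d → ℝ => y + fun _ => x) ⁻¹' A) := fun x =>
    hA.preimage (measurable_id.add_const _)
  -- the common integrand
  set g : (Fin d → ℝ) → Ω → ENNReal := fun z ω =>
    if (fun i => ξ (t i) ω - ξ (t 0) ω + z) ∈ A then
      ENNReal.ofReal (rexp (l ⬝ᵥ ξ (t 0) ω)) * ENNReal.ofReal (rexp (-(l ⬝ᵥ z)))
    else 0 with hgdef
  -- measurability of uncurried g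
  have hmapg : Measurable fun p : (Fin d → ℝ) × Ω =>
      (fun i => ξ (t i) p.2 - ξ (t 0) p.2 + p.1) := by
    refine measurable_pi_lambda _ fun i => ?_
    exact (((hξ (t i)).comp measurable_snd).sub ((hξ (t 0)).comp measurable_snd)).add
      measurable_fst
  have hgm : Measurable (Function.uncurry g) := by
    refine Measurable.ite (hmapg hA) ?_ measurable_const
    exact (ENNReal.measurable_ofReal.comp (Real.measurable_exp.comp
        (hdot.comp ((hξ (t 0)).comp measurable_snd)))).mul
      (ENNReal.measurable_ofReal.comp (Real.measurable_exp.comp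
        ((hdot.comp measurable_fst).neg)))
  -- the LHS integrand as a double integral
  have hmapg1 : Measurable fun p : (Fin d → ℝ) × Ω => (F p.2 + fun _ => p.1) := by
    refine measurable_pi_lambda _ fun i => ?_
    exact ((hξ (t i)).comp measurable_snd).add measurable_fst
  have hg1m : Measurable (Function.uncurry fun (x : Fin d → ℝ) (ω : Ω) =>
      if (F ω + fun _ => x) ∈ A then ENNReal.ofReal (rexp (-(l ⬝ᵥ x))) else 0) := by
    refine Measurable.ite (hmapg1 hA) ?_ measurable_const
    exact ENNReal.measurable_ofReal.comp (Real.measurable_exp.comp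
      ((hdot.comp measurable_fst).neg))
  calc
    ∫⁻ x, Measure.map F (volume : Measure Ω)
        ((fun y => y + fun _ => x) ⁻¹' A) * ENNReal.ofReal (rexp (-(l ⬝ᵥ x)))
      = ∫⁻ x, ∫⁻ ω, (if (F ω + fun _ => x) ∈ A then
          ENNReal.ofReal (rexp (-(l ⬝ᵥ x))) else 0) := by
        refine lintegral_congr fun x => ?_
        rw [Measure.map_apply hF (hshift x),
          ← lintegral_indicator_one (hF (hshift x)),
          ← lintegral_mul_const _ (measurable_one.indicator (hF (hshift x)))]
        refine lintegral_congr fun ω => ?_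
        by_cases h : (F ω + fun _ => x) ∈ A <;>
          simp [Set.indicator_apply, Set.mem_preimage, h]
    _ = ∫⁻ ω, ∫⁻ x, (if (F ω + fun _ => x) ∈ A then
          ENNReal.ofReal (rexp (-(l ⬝ᵥ x))) else 0) :=
        lintegral_lintegral_swap hg1m.aemeasurable
    _ = ∫⁻ ω, ∫⁻ z, g z ω := by
        refine lintegral_congr fun ω => ?_
        rw [← lintegral_add_right_eq_self
          (fun x => if (F ω + fun _ => x) ∈ A then
            ENNReal.ofReal (rexp (-(l ⬝ᵥ x))) else 0) (-(ξ (t 0) ω))]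
        refine lintegral_congr fun z => ?_
        have hset : (F ω + fun _ => z + -ξ (t 0) ω) =
            fun i => ξ (t i) ω - ξ (t 0) ω + z := by
          funext i j
          simp [hFdef]
          ring
        have hval : ENNReal.ofReal (rexp (-(l ⬝ᵥ (z + -ξ (t 0) ω)))) =
            ENNReal.ofReal (rexp (l ⬝ᵥ ξ (t 0) ω)) * ENNReal.ofReal (rexp (-(l ⬝ᵥ z))) := by
          rw [← ENNReal.ofReal_mul (le_of_lt (Real.exp_pos _)), ← Real.exp_add]
          congr 1
          simp [dotProduct_add, dotProduct_neg]
        rw [hgdef]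
        simp only [hset, hval]
    _ = ∫⁻ z, ∫⁻ ω, g z ω := (lintegral_lintegral_swap hgm.aemeasurable).symm
    _ = ∫⁻ z, μ ((fun y => y + fun _ => z) ⁻¹' A) * ENNReal.ofReal (rexp (-(l ⬝ᵥ z))) := by
        refine lintegral_congr fun z => ?_
        have hrw : (fun ω => ((fun y => y + fun _ => z) ⁻¹' A).indicator
            (fun _ => ENNReal.ofReal (rexp (l ⬝ᵥ ξ (t 0) ω))) fun i => ξ (t i) ω - ξ (t 0) ω)
            = fun ω => if (fun i => ξ (t i) ω - ξ (t 0) ω + z) ∈ A then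
                ENNReal.ofReal (rexp (l ⬝ᵥ ξ (t 0) ω)) else 0 := by
          funext ω
          have hd : ((fun i => ξ (t i) ω - ξ (t 0) ω) + fun _ => z)
              = fun i => ξ (t i) ω - ξ (t 0) ω + z := rfl
          simp [Set.indicator_apply, Set.mem_preimage, hd]
        rw [hμ, hrw, ← lintegral_mul_const _ (by
          exact Measurable.ite ((measurable_pi_lambda _ fun i =>
              (hξ (t i)).sub (hξ (t 0))) (hshift z))
            (ENNReal.measurable_ofReal.comp (Real.measurable_exp.comp (hdot.comp (hξ (t 0)))))
            measurable_const)]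
        refine lintegral_congr fun ω => ?_
        by_cases h : (fun i => ξ (t i) ω - ξ (t 0) ω + z) ∈ A <;> simp [hgdef, h]
end

section
/- Let X be a Gaussian random vector in ℝ^n with mean m and covariance matrix Σ, and suppose the Laplace transform ψ(u) = E e^{⟨u,X⟩} is known for all u ∈ L + a, where L is a linear subspace of ℝ^n and a ∈ ℝ^n. Then the quantities A^T Σ A, A^T(m + Σa), and ⟨m,a⟩ + ½⟨a, Σa⟩ are determined by ψ restricted to L + a, where A is any linear projection of ℝ^n onto L. Equivalently: if two Gaussian vectors with parameters (m1,Σ1) and (m2,Σ2) have the same Laplace transform on L + a, then A^T Σ1 A = A^T Σ2 A, A^T(m1 + Σ1 a) = A^T(m2 + Σ2 a), and ⟨m1,a⟩ + ½⟨a,Σ1 a⟩ = ⟨m2,a⟩ + ½⟨a,Σ2 a⟩. -/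
open Matrix Real

/-- If two Gaussian vectors in `ℝⁿ`, with parameters `(m₁,S₁)` and
`(m₂,S₂)`, have the same Laplace transform `exp(⟨m,u⟩ + ½⟨u,Σu⟩)` for all `u` in an
affine subspace `L + a`, then `AᵀS₁A = AᵀS₂A`, `Aᵀ(m₁+S₁a) = Aᵀ(m₂+S₂a)` and
`⟨m₁,a⟩ + ½⟨a,S₁a⟩ = ⟨m₂,a⟩ + ½⟨a,S₂a⟩`, where `A` is any projection onto `L`. -/
theorem stmt6 {n : ℕ} (L : Submodule ℝ (Fin n → ℝ)) (a : Fin n → ℝ)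
    (m₁ m₂ : Fin n → ℝ) (S₁ S₂ : Matrix (Fin n) (Fin n) ℝ)
    (hS₁ : S₁.PosSemidef) (hS₂ : S₂.PosSemidef)
    (hlap : ∀ v ∈ L, rexp (m₁ ⬝ᵥ (v + a) + (1 / 2) * ((v + a) ⬝ᵥ S₁.mulVec (v + a)))
      = rexp (m₂ ⬝ᵥ (v + a) + (1 / 2) * ((v + a) ⬝ᵥ S₂.mulVec (v + a))))
    (A : Matrix (Fin n) (Fin n) ℝ)
    (hAproj : ∀ x : Fin n → ℝ, A.mulVec x ∈ L)
    (hAid : ∀ x ∈ L, A.mulVec x = x) :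
    Aᵀ * S₁ * A = Aᵀ * S₂ * A ∧
    Aᵀ.mulVec (m₁ + S₁.mulVec a) = Aᵀ.mulVec (m₂ + S₂.mulVec a) ∧
    m₁ ⬝ᵥ a + (1 / 2) * (a ⬝ᵥ S₁.mulVec a) = m₂ ⬝ᵥ a + (1 / 2) * (a ⬝ᵥ S₂.mulVec a) := by
  have hT₁ : S₁ᵀ = S₁ := hS₁.1
  have hT₂ : S₂ᵀ = S₂ := hS₂.1
  have hsym₁ : ∀ v w, v ⬝ᵥ S₁.mulVec w = w ⬝ᵥ S₁.mulVec v := fun v w => by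
    rw [dotProduct_mulVec, ← mulVec_transpose, hT₁, dotProduct_comm]
  have hsym₂ : ∀ v w, v ⬝ᵥ S₂.mulVec w = w ⬝ᵥ S₂.mulVec v := fun v w => by
    rw [dotProduct_mulVec, ← mulVec_transpose, hT₂, dotProduct_comm]
  have hE : ∀ v ∈ L, m₁ ⬝ᵥ (v + a) + (1 / 2) * ((v + a) ⬝ᵥ S₁.mulVec (v + a))
      = m₂ ⬝ᵥ (v + a) + (1 / 2) * ((v + a) ⬝ᵥ S₂.mulVec (v + a)) := fun v hv =>
    Real.exp_injective (hlap v hv)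
  -- expanded form
  have hExp : ∀ v ∈ L,
      m₁ ⬝ᵥ v + m₁ ⬝ᵥ a + (1/2) * (v ⬝ᵥ S₁.mulVec v) + v ⬝ᵥ S₁.mulVec a
        + (1/2) * (a ⬝ᵥ S₁.mulVec a)
      = m₂ ⬝ᵥ v + m₂ ⬝ᵥ a + (1/2) * (v ⬝ᵥ S₂.mulVec v) + v ⬝ᵥ S₂.mulVec a
        + (1/2) * (a ⬝ᵥ S₂.mulVec a) := by
    intro v hv
    have h := hE v hv
    simp only [mulVec_add, dotProduct_add, add_dotProduct] at h
    rw [hsym₁ a v, hsym₂ a v] at h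
    linarith
  have h0 : m₁ ⬝ᵥ a + (1 / 2) * (a ⬝ᵥ S₁.mulVec a)
      = m₂ ⬝ᵥ a + (1 / 2) * (a ⬝ᵥ S₂.mulVec a) := by
    have h := hExp 0 L.zero_mem
    simp only [zero_dotProduct, dotProduct_zero, mulVec_zero, dotProduct_zero] at h
    linarith
  have key : ∀ v ∈ L,
      (m₁ ⬝ᵥ v + v ⬝ᵥ S₁.mulVec a = m₂ ⬝ᵥ v + v ⬝ᵥ S₂.mulVec a) ∧
      v ⬝ᵥ S₁.mulVec v = v ⬝ᵥ S₂.mulVec v := by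
    intro v hv
    have h1 := hExp v hv
    have h2 := hExp (-v) (L.neg_mem hv)
    simp only [mulVec_neg, dotProduct_neg, neg_dotProduct, neg_neg] at h2
    constructor <;> linarith
  -- bilinear form equality on L
  have hbil : ∀ v ∈ L, ∀ w ∈ L, v ⬝ᵥ S₁.mulVec w = v ⬝ᵥ S₂.mulVec w := by
    intro v hv w hw
    have h1 := (key v hv).2
    have h2 := (key w hw).2
    have h3 := (key (v + w) (L.add_mem hv hw)).2
    simp only [mulVec_add, dotProduct_add, add_dotProduct] at h3
    rw [hsym₁ w v, hsym₂ w v] at h3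
    linarith
  refine ⟨?_, ?_, h0⟩
  · ext i j
    have e : ∀ (S : Matrix (Fin n) (Fin n) ℝ),
        (Aᵀ * S * A) i j = (A.mulVec (Pi.single i 1)) ⬝ᵥ S.mulVec (A.mulVec (Pi.single j 1)) := by
      intro S
      have : (Aᵀ * S * A) i j = Pi.single i 1 ⬝ᵥ (Aᵀ * S * A).mulVec (Pi.single j 1) := by
        simp [mulVec_single, single_dotProduct]
      rw [this, ← mulVec_mulVec, ← mulVec_mulVec, dotProduct_mulVec (Pi.single i 1) Aᵀ,
        vecMul_transpose]
    rw [e S₁, e S₂, hbil _ (hAproj _) _ (hAproj _)]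
  · funext i
    have e : ∀ (m : Fin n → ℝ) (S : Matrix (Fin n) (Fin n) ℝ),
        Aᵀ.mulVec (m + S.mulVec a) i
          = m ⬝ᵥ (A.mulVec (Pi.single i 1)) + (A.mulVec (Pi.single i 1)) ⬝ᵥ S.mulVec a := by
      intro m S
      have : Aᵀ.mulVec (m + S.mulVec a) i
          = Pi.single i 1 ⬝ᵥ Aᵀ.mulVec (m + S.mulVec a) := by
        simp [single_dotProduct]
      rw [this, dotProduct_mulVec, vecMul_transpose, dotProduct_add, dotProduct_comm]
    rw [e m₁ S₁, e m₂ S₂]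
    exact (key _ (hAproj _)).1
end

section
/- Let ξ be an ℝ^d-valued Gaussian process and H a linear subspace of ℝ^d; write ξ = ξ^H + ξ^⊥ for the orthogonal decomposition, with means m^H, m^⊥ and cross-covariance C(t1,t2) = Cov(ξ^H(t1), ξ^⊥(t2)). Suppose ξ and the exponential measure e_λ^H on H (density e^{−⟨λ,x⟩}, x ∈ H, λ ∈ H) generate a stationary particle system. Then: (ii) ξ^⊥ − m^⊥ is a stationary process; (iii) C(t1,t1) − C(t2,t1) = C(t1+s,t1+s) − C(t2+s,t1+s) for all s,t1,t2; and (iv) m^⊥(t2) + C(t1,t2)^T λ = m^⊥(t2+s) + C(t1+s,t2+s)^T λ for all s,t1,t2. -/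
open Matrix Real

private lemma dotT {m n : ℕ} (A : Matrix (Fin m) (Fin n) ℝ) (v : Fin m → ℝ)
    (w : Fin n → ℝ) : w ⬝ᵥ Aᵀ.mulVec v = v ⬝ᵥ A.mulVec w := by
  simp only [dotProduct, Matrix.mulVec, Matrix.transpose_apply, Finset.mul_sum]
  rw [Finset.sum_comm]
  exact Finset.sum_congr rfl fun i _ => Finset.sum_congr rfl fun j _ => by ring

private lemma vec_ext {n : ℕ} {x y : Fin n → ℝ} (h : ∀ v, v ⬝ᵥ x = v ⬝ᵥ y) : x = y := by
  funext i
  have := h (Pi.single i 1)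
  simpa [single_dotProduct] using this

private lemma mat_ext {m n : ℕ} {A B : Matrix (Fin m) (Fin n) ℝ}
    (h : ∀ v w, v ⬝ᵥ A.mulVec w = v ⬝ᵥ B.mulVec w) : A = B := by
  ext i j
  have := h (Pi.single i 1) (Pi.single j 1)
  simpa [single_dotProduct, Matrix.mulVec_single] using this

/-- necessity in Theorem `thr:subspace-gauss2`, in coordinates where
`H` is the span of the first `k` basis vectors of `ℝ^d = ℝ^k × ℝ^l`. If a Gaussian
process `ξ = (ξ^H, ξ^⊥)` with means `m^H, m^⊥`, covariances `S^H, S^⊥` and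
cross-covariance `C(t₁,t₂) = Cov(ξ^H(t₁), ξ^⊥(t₂))` generates with `e_λ^H` a stationary
particle system (equivalently, its Laplace transforms at arguments whose `H`-components
sum to `λ` are shift-invariant), then (ii) `ξ^⊥ - m^⊥` is stationary, (iii)
`C(t₁,t₁)-C(t₂,t₁)` is shift-invariant, and (iv) `m^⊥(t₂)+C(t₁,t₂)ᵀλ` is
shift-invariant. -/
theorem stmt15 {k l : ℕ}
    (mH : ℝ → Fin k → ℝ) (mP : ℝ → Fin l → ℝ)
    (SH : ℝ → ℝ → Matrix (Fin k) (Fin k) ℝ) (SP : ℝ → ℝ → Matrix (Fin l) (Fin l) ℝ)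
    (C : ℝ → ℝ → Matrix (Fin k) (Fin l) ℝ)
    (hSH : ∀ t₁ t₂, (SH t₁ t₂)ᵀ = SH t₂ t₁) (hSP : ∀ t₁ t₂, (SP t₁ t₂)ᵀ = SP t₂ t₁)
    (l0 : Fin k → ℝ)
    (hstat : ∀ (n : ℕ) (t : Fin n → ℝ) (s : ℝ) (u : Fin n → (Fin k → ℝ) × (Fin l → ℝ)),
      (∑ i, (u i).1) = l0 →
      ((∑ i, ((u i).1 ⬝ᵥ mH (t i) + (u i).2 ⬝ᵥ mP (t i)))
        + (1 / 2) * ∑ i, ∑ j,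
          ((u i).1 ⬝ᵥ (SH (t i) (t j)).mulVec ((u j).1)
            + (u i).1 ⬝ᵥ (C (t i) (t j)).mulVec ((u j).2)
            + (u j).1 ⬝ᵥ (C (t j) (t i)).mulVec ((u i).2)
            + (u i).2 ⬝ᵥ (SP (t i) (t j)).mulVec ((u j).2)))
      = ((∑ i, ((u i).1 ⬝ᵥ mH (t i + s) + (u i).2 ⬝ᵥ mP (t i + s)))
        + (1 / 2) * ∑ i, ∑ j,
          ((u i).1 ⬝ᵥ (SH (t i + s) (t j + s)).mulVec ((u j).1)
            + (u i).1 ⬝ᵥ (C (t i + s) (t j + s)).mulVec ((u j).2)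
            + (u j).1 ⬝ᵥ (C (t j + s) (t i + s)).mulVec ((u i).2)
            + (u i).2 ⬝ᵥ (SP (t i + s) (t j + s)).mulVec ((u j).2)))) :
    (∀ s t₁ t₂, SP (t₁ + s) (t₂ + s) = SP t₁ t₂) ∧
    (∀ s t₁ t₂, C (t₁ + s) (t₁ + s) - C (t₂ + s) (t₁ + s) = C t₁ t₁ - C t₂ t₁) ∧
    (∀ s t₁ t₂, mP (t₂ + s) + (C (t₁ + s) (t₂ + s))ᵀ.mulVec l0
      = mP t₂ + (C t₁ t₂)ᵀ.mulVec l0) := by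
  have key : ∀ (s t₁ t₂ : ℝ) (a : Fin k → ℝ) (v w : Fin l → ℝ),
      ((a ⬝ᵥ mH t₁ + v ⬝ᵥ mP t₁) + ((l0 - a) ⬝ᵥ mH t₂ + w ⬝ᵥ mP t₂))
        + (1 / 2) * (
          (a ⬝ᵥ (SH t₁ t₁).mulVec a + a ⬝ᵥ (C t₁ t₁).mulVec v
            + a ⬝ᵥ (C t₁ t₁).mulVec v + v ⬝ᵥ (SP t₁ t₁).mulVec v)
          + (a ⬝ᵥ (SH t₁ t₂).mulVec (l0 - a) + a ⬝ᵥ (C t₁ t₂).mulVec w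
            + (l0 - a) ⬝ᵥ (C t₂ t₁).mulVec v + v ⬝ᵥ (SP t₁ t₂).mulVec w)
          + ((l0 - a) ⬝ᵥ (SH t₂ t₁).mulVec a + (l0 - a) ⬝ᵥ (C t₂ t₁).mulVec v
            + a ⬝ᵥ (C t₁ t₂).mulVec w + w ⬝ᵥ (SP t₂ t₁).mulVec v)
          + ((l0 - a) ⬝ᵥ (SH t₂ t₂).mulVec (l0 - a) + (l0 - a) ⬝ᵥ (C t₂ t₂).mulVec w
            + (l0 - a) ⬝ᵥ (C t₂ t₂).mulVec w + w ⬝ᵥ (SP t₂ t₂).mulVec w))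
      = ((a ⬝ᵥ mH (t₁ + s) + v ⬝ᵥ mP (t₁ + s)) + ((l0 - a) ⬝ᵥ mH (t₂ + s) + w ⬝ᵥ mP (t₂ + s)))
        + (1 / 2) * (
          (a ⬝ᵥ (SH (t₁ + s) (t₁ + s)).mulVec a + a ⬝ᵥ (C (t₁ + s) (t₁ + s)).mulVec v
            + a ⬝ᵥ (C (t₁ + s) (t₁ + s)).mulVec v + v ⬝ᵥ (SP (t₁ + s) (t₁ + s)).mulVec v)
          + (a ⬝ᵥ (SH (t₁ + s) (t₂ + s)).mulVec (l0 - a) + a ⬝ᵥ (C (t₁ + s) (t₂ + s)).mulVec w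
            + (l0 - a) ⬝ᵥ (C (t₂ + s) (t₁ + s)).mulVec v + v ⬝ᵥ (SP (t₁ + s) (t₂ + s)).mulVec w)
          + ((l0 - a) ⬝ᵥ (SH (t₂ + s) (t₁ + s)).mulVec a + (l0 - a) ⬝ᵥ (C (t₂ + s) (t₁ + s)).mulVec v
            + a ⬝ᵥ (C (t₁ + s) (t₂ + s)).mulVec w + w ⬝ᵥ (SP (t₂ + s) (t₁ + s)).mulVec v)
          + ((l0 - a) ⬝ᵥ (SH (t₂ + s) (t₂ + s)).mulVec (l0 - a) + (l0 - a) ⬝ᵥ (C (t₂ + s) (t₂ + s)).mulVec w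
            + (l0 - a) ⬝ᵥ (C (t₂ + s) (t₂ + s)).mulVec w + w ⬝ᵥ (SP (t₂ + s) (t₂ + s)).mulVec w)) := by
    intro s t₁ t₂ a v w
    have h := hstat 2 ![t₁, t₂] s ![(a, v), ((l0 - a), w)] (by
      simp [Fin.sum_univ_two])
    simp only [Fin.sum_univ_two, Matrix.cons_val_zero, Matrix.cons_val_one,
      Matrix.head_cons] at h
    linear_combination h
  have hii : ∀ s t₁ t₂, SP (t₁ + s) (t₂ + s) = SP t₁ t₂ := by
    intro s t₁ t₂
    apply mat_ext
    intro v w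
    have h1 := key s t₁ t₂ 0 v w
    have h2 := key s t₁ t₂ 0 v 0
    have h3 := key s t₁ t₂ 0 0 w
    have h4 := key s t₁ t₂ 0 0 0
    simp only [zero_dotProduct, dotProduct_zero, Matrix.mulVec_zero, sub_zero,
      add_zero, zero_add] at h1 h2 h3 h4
    have e1 : w ⬝ᵥ (SP t₂ t₁).mulVec v = v ⬝ᵥ (SP t₁ t₂).mulVec w := by
      rw [← hSP t₁ t₂, dotT]
    have e2 : w ⬝ᵥ (SP (t₂ + s) (t₁ + s)).mulVec v
        = v ⬝ᵥ (SP (t₁ + s) (t₂ + s)).mulVec w := by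
      rw [← hSP (t₁ + s) (t₂ + s), dotT]
    linarith
  refine ⟨hii, ?_, ?_⟩
  · intro s t₁ t₂
    apply mat_ext
    intro a v
    rw [Matrix.sub_mulVec, dotProduct_sub, Matrix.sub_mulVec, dotProduct_sub]
    have h1 := key s t₁ t₂ a v 0
    have h2 := key s t₁ t₂ a 0 0
    have h3 := key s t₁ t₂ 0 v 0
    have h4 := key s t₁ t₂ 0 0 0
    simp only [zero_dotProduct, dotProduct_zero, Matrix.mulVec_zero, sub_zero,
      add_zero, zero_add, sub_dotProduct] at h1 h2 h3 h4
    linarith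
  · intro s t₁ t₂
    apply vec_ext
    intro v
    rw [dotProduct_add, dotProduct_add, dotT, dotT]
    have h1 := key s t₂ t₁ 0 v 0
    have h2 := key s t₂ t₁ 0 0 0
    simp only [zero_dotProduct, dotProduct_zero, Matrix.mulVec_zero, sub_zero,
      add_zero, zero_add] at h1 h2
    have e1 : v ⬝ᵥ (SP (t₂ + s) (t₂ + s)).mulVec v = v ⬝ᵥ (SP t₂ t₂).mulVec v := by
      rw [hii]
    linarith
end

section
/- Let Z be a standard Gaussian random variable, λ ∈ ℝ, and define the ℝ²-valued process ξ(t) = (Zt − ½λt², Z − λt). Let H = ℝ×{0} ⊂ ℝ². Then ξ and the measure e^H_{(λ,0)} on H with density e^{−λx}, x ∈ ℝ, generate a stationary particle system; in particular, for all s, t1,...,tn ∈ ℝ and u1,...,un ∈ ℝ² with the first coordinates summing to λ, E exp{Σ⟨ui,ξ(ti)⟩} = E exp{Σ⟨ui,ξ(ti+s)⟩}. -/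
open MeasureTheory ProbabilityTheory Real

lemma gauss_mgf_aux (a b : ℝ) :
    ∫ z, rexp (a * z + b) ∂(gaussianReal 0 1) = rexp (a ^ 2 / 2 + b) := by
  rw [gaussianReal_of_var_ne_zero 0 one_ne_zero]
  have hpdf : gaussianPDF 0 1 = fun x => ((gaussianPDFReal 0 1 x).toNNReal : ENNReal) := rfl
  rw [hpdf, integral_withDensity_eq_integral_smul
    ((measurable_gaussianPDFReal 0 1).real_toNNReal)]
  have hx : ∀ x, (gaussianPDFReal 0 1 x).toNNReal • rexp (a * x + b)
      = rexp (a ^ 2 / 2 + b) * gaussianPDFReal a 1 x := by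
    intro x
    rw [NNReal.smul_def, smul_eq_mul, Real.coe_toNNReal _ (gaussianPDFReal_nonneg _ _ _)]
    simp only [gaussianPDFReal, NNReal.coe_one, mul_one]
    rw [mul_assoc, ← Real.exp_add, mul_comm (rexp _), mul_assoc, ← Real.exp_add]
    congr 1
    ring
  simp_rw [hx]
  rw [integral_const_mul, integral_gaussianPDFReal_eq_one a one_ne_zero, mul_one]

/-- Example `ex:nonzeroB`. For a standard Gaussian `Z` and the process
`ξ(t) = (Zt - ½λt², Z - λt)` the particle system with `e^H_{(λ,0)}`, `H = ℝ×{0}`, is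
stationary: the Laplace transforms at arguments whose first coordinates sum to `λ` are
invariant under simultaneous time shifts. -/
theorem stmt16 (lam : ℝ) :
    ∀ (n : ℕ) (t : Fin n → ℝ) (s : ℝ) (u : Fin n → ℝ × ℝ), (∑ i, (u i).1) = lam →
      (∫ z, rexp (∑ i, ((u i).1 * (z * t i - lam * (t i) ^ 2 / 2)
          + (u i).2 * (z - lam * t i))) ∂(gaussianReal 0 1))
        = ∫ z, rexp (∑ i, ((u i).1 * (z * (t i + s) - lam * (t i + s) ^ 2 / 2)
          + (u i).2 * (z - lam * (t i + s)))) ∂(gaussianReal 0 1) := by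
  intro n t s u h
  have hsum : ∀ (τ : Fin n → ℝ) (z : ℝ),
      (∑ i, ((u i).1 * (z * τ i - lam * (τ i) ^ 2 / 2) + (u i).2 * (z - lam * τ i)))
        = (∑ i, ((u i).1 * τ i + (u i).2)) * z
          + ∑ i, (-(u i).1 * lam * (τ i) ^ 2 / 2 - (u i).2 * lam * τ i) := by
    intro τ z
    rw [Finset.sum_mul, ← Finset.sum_add_distrib]
    exact Finset.sum_congr rfl fun i _ => by ring
  simp_rw [hsum, gauss_mgf_aux]
  have e1 : ∑ i, ((u i).1 * (t i + s) + (u i).2)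
      = (∑ i, ((u i).1 * t i + (u i).2)) + lam * s := by
    rw [← h, Finset.sum_mul, ← Finset.sum_add_distrib]
    exact Finset.sum_congr rfl fun i _ => by ring
  have e2 : ∑ i, (-(u i).1 * lam * (t i + s) ^ 2 / 2 - (u i).2 * lam * (t i + s))
      = (∑ i, (-(u i).1 * lam * (t i) ^ 2 / 2 - (u i).2 * lam * t i))
        - lam * s * (∑ i, ((u i).1 * t i + (u i).2)) - lam ^ 2 * s ^ 2 / 2 := by
    have : ∀ i : Fin n, -(u i).1 * lam * (t i + s) ^ 2 / 2 - (u i).2 * lam * (t i + s)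
        = (-(u i).1 * lam * (t i) ^ 2 / 2 - (u i).2 * lam * t i)
          + (-(lam * s)) * ((u i).1 * t i + (u i).2) + (-(lam * s ^ 2 / 2)) * (u i).1 := by
      intro i; ring
    rw [Finset.sum_congr rfl fun i _ => this i, Finset.sum_add_distrib,
      Finset.sum_add_distrib, ← Finset.mul_sum, ← Finset.mul_sum, h]
    ring
  rw [e1, e2]
  congr 1
  ring
end
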